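/- arXiv:1307.5524 — 4 statements merged into one kernel-verified Lean document; each statement's English description precedes it below -/
import Mathlib

section
/- (de Caen's inequality) Let $A_1, \ldots, A_n$ be events in a probability space, each with positive probability. Then $\Pr\left(\bigcup_{i=1}^n A_i\right) \geq \sum_{i=1}^n \frac{\Pr(A_i)^2}{\sum_{j=1}^n \Pr(A_i \cap A_j)}$. -/
/-!
Let `N ω` count the events containing `ω`. On `Aᵢ` we have `1 ≤ N < ∞`, so Cauchy–Schwarz gives
`P(Aᵢ)² ≤ (∫_{Aᵢ} N) (∫_{Aᵢ} 1/N)`, and `∫_{Aᵢ} N = ∑ⱼ P(Aᵢ ∩ Aⱼ)`. Summing `∫_{Aᵢ} 1/N` over `i`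
integrates `∑ᵢ 1_{Aᵢ} / N = 1_{⋃ Aᵢ}`, which gives `P(⋃ Aᵢ)`.
-/

open MeasureTheory
open scoped ENNReal

section CauchySchwarz

variable {α : Type*} [MeasurableSpace α] {μ : Measure α}

theorem measure_univ_sq_le_lintegral_mul_lintegral_inv {f : α → ℝ≥0∞} (hf : AEMeasurable f μ)
    (h0 : ∀ᵐ x ∂μ, f x ≠ 0) (htop : ∀ᵐ x ∂μ, f x ≠ ∞) :
    μ Set.univ ^ 2 ≤ (∫⁻ x, f x ∂μ) * ∫⁻ x, (f x)⁻¹ ∂μ := by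
  have hsqrt : ∀ a b : ℝ≥0∞, (a ^ (1 / 2 : ℝ) * b ^ (1 / 2 : ℝ)) ^ 2 = a * b := fun a b => by
    rw [← ENNReal.mul_rpow_of_nonneg _ _ (by norm_num), ← ENNReal.rpow_natCast,
      ← ENNReal.rpow_mul]
    norm_num
  have hone : ∫⁻ x, f x ^ (1 / 2 : ℝ) * (f x)⁻¹ ^ (1 / 2 : ℝ) ∂μ = μ Set.univ := by
    rw [← lintegral_one]
    refine lintegral_congr_ae ?_
    filter_upwards [h0, htop] with x hx0 hxtop
    rw [← ENNReal.mul_rpow_of_nonneg _ _ (by norm_num), ENNReal.mul_inv_cancel hx0 hxtop,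
      ENNReal.one_rpow]
  calc μ Set.univ ^ 2
      ≤ ((∫⁻ x, f x ∂μ) ^ (1 / 2 : ℝ) * (∫⁻ x, (f x)⁻¹ ∂μ) ^ (1 / 2 : ℝ)) ^ 2 := by
        rw [← hone]
        gcongr
        exact ENNReal.lintegral_mul_norm_pow_le hf hf.inv (by norm_num) (by norm_num) (by norm_num)
    _ = (∫⁻ x, f x ∂μ) * ∫⁻ x, (f x)⁻¹ ∂μ := hsqrt _ _

end CauchySchwarz

section CoverCount

variable {Ω ι : Type*} [Fintype ι] (A : ι → Set Ω)

noncomputable def coverCount (ω : Ω) : ℝ≥0∞ :=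
  ∑ i, (A i).indicator 1 ω

variable {A}

theorem one_le_coverCount {i : ι} {ω : Ω} (h : ω ∈ A i) : 1 ≤ coverCount A ω := by
  calc (1 : ℝ≥0∞) = (A i).indicator 1 ω := (Set.indicator_of_mem h (1 : Ω → ℝ≥0∞)).symm
    _ ≤ coverCount A ω :=
      Finset.single_le_sum (f := fun j => (A j).indicator 1 ω) (fun _ _ => zero_le)
        (Finset.mem_univ i)

theorem coverCount_ne_zero {i : ι} {ω : Ω} (h : ω ∈ A i) : coverCount A ω ≠ 0 :=
  (one_le_coverCount h).trans_lt' zero_lt_one |>.ne'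

theorem coverCount_ne_top (ω : Ω) : coverCount A ω ≠ ∞ :=
  ENNReal.sum_ne_top.2 fun i _ => by
    by_cases h : ω ∈ A i <;> simp [h]

theorem sum_indicator_inv_coverCount (ω : Ω) :
    ∑ i, (A i).indicator (fun ω => (coverCount A ω)⁻¹) ω = (⋃ i, A i).indicator 1 ω := by
  by_cases hω : ω ∈ ⋃ i, A i
  · obtain ⟨i, hi⟩ := Set.mem_iUnion.1 hω
    have hsum : ∑ j, (A j).indicator (fun ω => (coverCount A ω)⁻¹) ω
        = coverCount A ω * (coverCount A ω)⁻¹ := by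
      simp only [coverCount, Finset.sum_mul]
      refine Finset.sum_congr rfl fun j _ => ?_
      by_cases hj : ω ∈ A j <;> simp [hj]
    rw [hsum, ENNReal.mul_inv_cancel (coverCount_ne_zero hi) (coverCount_ne_top ω),
      Set.indicator_of_mem hω, Pi.one_apply]
  · rw [Set.indicator_of_notMem hω]
    exact Finset.sum_eq_zero fun j _ =>
      Set.indicator_of_notMem (fun h => hω (Set.mem_iUnion.2 ⟨j, h⟩)) _

variable [MeasurableSpace Ω]

theorem measurable_coverCount (hA : ∀ i, MeasurableSet (A i)) : Measurable (coverCount A) :=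
  Finset.measurable_sum _ fun i _ => measurable_one.indicator (hA i)

theorem setLIntegral_coverCount (μ : Measure Ω) (hA : ∀ i, MeasurableSet (A i)) (i : ι) :
    ∫⁻ ω in A i, coverCount A ω ∂μ = ∑ j, μ (A i ∩ A j) := by
  simp only [coverCount]
  rw [lintegral_finsetSum _ fun j _ => measurable_one.indicator (hA j)]
  refine Finset.sum_congr rfl fun j _ => ?_
  rw [lintegral_indicator_one (hA j), Measure.restrict_apply (hA j), Set.inter_comm]

theorem sum_setLIntegral_inv_coverCount (μ : Measure Ω) (hA : ∀ i, MeasurableSet (A i)) :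
    ∑ i, ∫⁻ ω in A i, (coverCount A ω)⁻¹ ∂μ = μ (⋃ i, A i) := by
  have hinv : Measurable fun ω => (coverCount A ω)⁻¹ := (measurable_coverCount hA).inv
  simp_rw [← lintegral_indicator (hA _)]
  rw [← lintegral_finsetSum _ fun i _ => hinv.indicator (hA i)]
  simp_rw [sum_indicator_inv_coverCount]
  exact lintegral_indicator_one (MeasurableSet.iUnion hA)

end CoverCount

theorem stmt7_general {Ω : Type*} [MeasurableSpace Ω] (μ : Measure Ω)
    (n : ℕ) (A : Fin n → Set Ω) (hmeas : ∀ i, MeasurableSet (A i)) :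
    ∑ i, (μ (A i)) ^ 2 / (∑ j, μ (A i ∩ A j)) ≤ μ (⋃ i, A i) := by
  calc ∑ i, (μ (A i)) ^ 2 / (∑ j, μ (A i ∩ A j))
      ≤ ∑ i, ∫⁻ ω in A i, (coverCount A ω)⁻¹ ∂μ := by
        refine Finset.sum_le_sum fun i _ => ENNReal.div_le_of_le_mul' ?_
        rw [← setLIntegral_coverCount μ hmeas i, ← Measure.restrict_apply_univ]
        refine measure_univ_sq_le_lintegral_mul_lintegral_inv
          (measurable_coverCount hmeas).aemeasurable ?_ (.of_forall coverCount_ne_top)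
        exact (ae_restrict_iff' (hmeas i)).2 (.of_forall fun ω => coverCount_ne_zero)
    _ = μ (⋃ i, A i) := sum_setLIntegral_inv_coverCount μ hmeas

/-- de Caen's inequality: For events `A₁,…,Aₙ` of positive probability in a
probability space, `P(⋃ i, Aᵢ) ≥ ∑ i, P(Aᵢ)² / ∑ j, P(Aᵢ ∩ Aⱼ)`. -/
theorem stmt7 {Ω : Type*} [MeasurableSpace Ω] (μ : Measure Ω) [IsProbabilityMeasure μ]
    (n : ℕ) (A : Fin n → Set Ω) (hmeas : ∀ i, MeasurableSet (A i))
    (hpos : ∀ i, 0 < μ (A i)) :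
    ∑ i, (μ (A i)) ^ 2 / (∑ j, μ (A i ∩ A j)) ≤ μ (⋃ i, A i) :=
  stmt7_general μ n A hmeas
end

section
/- Let $A_1, \ldots, A_n$ be events each of probability $\alpha > 0$, and suppose there is a constant $c \geq 0$ and for each $i$ at most $s$ indices $j \neq i$ with $\Pr(A_i \cap A_j) \leq \alpha$, while for all other $j \neq i$, $\Pr(A_i \cap A_j) = \alpha^2$. Then by de Caen's inequality, $\Pr\left(\bigcup_i A_i\right) \geq \frac{n\alpha}{(n-1-s)\alpha + (s+1)} \geq \frac{n\alpha}{n\alpha + (s+1)}$. -/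
/-!
With `f = ∑ᵢ 1_{Aᵢ}` and `U = ⋃ᵢ Aᵢ`, the polynomial `t ↦ 𝔼[(f - t·1_U)²]` is nonnegative,
and its discriminant gives the Chung–Erdős (de Caen) bound
`(∑ᵢ P(Aᵢ))² ≤ P(U) · ∑ᵢ ∑ⱼ P(Aᵢ ∩ Aⱼ)`. Under the hypotheses each row `∑ⱼ P(Aᵢ ∩ Aⱼ)` is
at most `α ((n-1-s)α + (s+1))`, since replacing an `α²` entry by an entry `≤ α` costs at most
`α - α²` and there are at most `s` such entries.
-/

open MeasureTheory Finset

section ChungErdos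

variable {Ω ι : Type*} [Fintype ι]

lemma sq_sum_indicator_one (A : ι → Set Ω) (ω : Ω) :
    (∑ i, (A i).indicator (1 : Ω → ℝ) ω) ^ 2
      = ∑ p : ι × ι, (A p.1 ∩ A p.2).indicator (1 : Ω → ℝ) ω := by
  simp only [sq, sum_mul_sum, Fintype.sum_prod_type, Set.inter_indicator_one, Pi.mul_apply]

lemma two_mul_sum_indicator_sub_le (A : ι → Set Ω) (t : ℝ) (ω : Ω) :
    2 * t * ∑ i, (A i).indicator (1 : Ω → ℝ) ω - t ^ 2 * (⋃ i, A i).indicator 1 ω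
      ≤ ∑ p : ι × ι, (A p.1 ∩ A p.2).indicator (1 : Ω → ℝ) ω := by
  rw [← sq_sum_indicator_one]
  by_cases hω : ω ∈ ⋃ i, A i
  · rw [Set.indicator_of_mem hω, Pi.one_apply]
    nlinarith [sq_nonneg (∑ i, (A i).indicator (1 : Ω → ℝ) ω - t)]
  · have hA : ∀ i, ω ∉ A i := fun i hi ↦ hω (Set.mem_iUnion.2 ⟨i, hi⟩)
    simp [Set.indicator_of_notMem hω, Set.indicator_of_notMem (hA _)]

variable [MeasurableSpace Ω] {μ : Measure Ω}

lemma integrable_sum_indicator_one [IsFiniteMeasure μ] {B : ι → Set Ω}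
    (hB : ∀ i, MeasurableSet (B i)) :
    Integrable (fun ω ↦ ∑ i, (B i).indicator (1 : Ω → ℝ) ω) μ :=
  integrable_finsetSum _ fun i _ ↦ (integrable_const 1).indicator (hB i)

lemma integral_sum_indicator_one [IsFiniteMeasure μ] {B : ι → Set Ω}
    (hB : ∀ i, MeasurableSet (B i)) :
    ∫ ω, ∑ i, (B i).indicator (1 : Ω → ℝ) ω ∂μ = ∑ i, μ.real (B i) := by
  rw [integral_finsetSum _ fun i _ ↦ (integrable_const 1).indicator (hB i)]
  exact sum_congr rfl fun i _ ↦ integral_indicator_one (hB i)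

theorem sq_sum_measureReal_le_measureReal_iUnion_mul [IsFiniteMeasure μ] {A : ι → Set Ω}
    (hA : ∀ i, MeasurableSet (A i)) :
    (∑ i, μ.real (A i)) ^ 2 ≤ μ.real (⋃ i, A i) * ∑ i, ∑ j, μ.real (A i ∩ A j) := by
  have hU : MeasurableSet (⋃ i, A i) := MeasurableSet.iUnion hA
  have hpairs : ∀ p : ι × ι, MeasurableSet (A p.1 ∩ A p.2) := fun p ↦ (hA p.1).inter (hA p.2)
  have hquad : ∀ t : ℝ, 0 ≤ μ.real (⋃ i, A i) * (t * t) + (-2 * ∑ i, μ.real (A i)) * t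
      + ∑ i, ∑ j, μ.real (A i ∩ A j) := by
    intro t
    have hf := integrable_sum_indicator_one (μ := μ) hA
    have h1U : Integrable ((⋃ i, A i).indicator (1 : Ω → ℝ)) μ :=
      (integrable_const 1).indicator hU
    have hint : ∫ ω, (2 * t * ∑ i, (A i).indicator (1 : Ω → ℝ) ω
          - t ^ 2 * (⋃ i, A i).indicator 1 ω) ∂μ
        ≤ ∫ ω, ∑ p : ι × ι, (A p.1 ∩ A p.2).indicator (1 : Ω → ℝ) ω ∂μ :=
      integral_mono ((hf.const_mul _).sub (h1U.const_mul _))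
        (integrable_sum_indicator_one hpairs) (two_mul_sum_indicator_sub_le A t)
    rw [integral_sub (hf.const_mul _) (h1U.const_mul _), integral_const_mul, integral_const_mul,
      integral_sum_indicator_one hA, integral_sum_indicator_one hpairs, integral_indicator_one hU,
      Fintype.sum_prod_type] at hint
    linarith
  have := discrim_le_zero hquad
  rw [discrim] at this
  linarith

end ChungErdos

lemma sum_le_of_le_of_eq_sq_off {ι : Type*} [Fintype ι] [DecidableEq ι] {g : ι → ℝ}
    {α : ℝ} {s : ℕ} {i : ι} {bad : Finset ι} (hα0 : 0 ≤ α) (hα1 : α ≤ 1) (hcard : #bad ≤ s)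
    (hi : i ∉ bad) (hgi : g i = α) (hbad : ∀ j ∈ bad, g j ≤ α)
    (hgood : ∀ j ≠ i, j ∉ bad → g j = α ^ 2) :
    ∑ j, g j ≤ α * ((Fintype.card ι - 1 - s) * α + (s + 1)) := by
  have hsub : bad ⊆ univ.erase i := fun j hj ↦ mem_erase.2 ⟨fun h ↦ hi (h ▸ hj), mem_univ j⟩
  have hcount : (#(univ.erase i \ bad) : ℝ) = Fintype.card ι - 1 - #bad := by
    have := card_sdiff_add_card_eq_card hsub
    rw [card_erase_of_mem (mem_univ i), card_univ] at this
    have hpos : 0 < Fintype.card ι := Fintype.card_pos_iff.2 ⟨i⟩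
    rw [eq_sub_iff_add_eq, eq_sub_iff_add_eq]
    exact_mod_cast (by omega : #(univ.erase i \ bad) + #bad + 1 = Fintype.card ι)
  have hsum_bad : ∑ j ∈ bad, g j ≤ #bad * α := by
    simpa using sum_le_card_nsmul bad g α hbad
  have hsum_good : ∑ j ∈ univ.erase i \ bad, g j = #(univ.erase i \ bad) * α ^ 2 := by
    rw [sum_congr rfl fun j hj ↦ hgood j (ne_of_mem_erase (mem_sdiff.1 hj).1) (mem_sdiff.1 hj).2]
    simp
  rw [← add_sum_erase _ _ (mem_univ i), ← sum_sdiff hsub, hgi, hsum_good, hcount]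
  have hcard' : (#bad : ℝ) ≤ s := by exact_mod_cast hcard
  nlinarith [mul_nonneg (sub_nonneg.2 hcard') (mul_nonneg hα0 (sub_nonneg.2 hα1))]

theorem stmt11_general {Ω : Type*} [MeasurableSpace Ω] (μ : Measure Ω) [IsProbabilityMeasure μ]
    (n : ℕ) (hn : 2 ≤ n) (A : Fin n → Set Ω) (hmeas : ∀ i, MeasurableSet (A i))
    (α : ℝ) (hα0 : 0 < α) (hα1 : α ≤ 1)
    (s : ℕ)
    (hA : ∀ i, (μ (A i)).toReal = α)
    (hbad : ∀ i, ∃ bad : Finset (Fin n), bad.card ≤ s ∧ i ∉ bad ∧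
      ∀ j, j ≠ i →
        (j ∈ bad → (μ (A i ∩ A j)).toReal ≤ α) ∧
        (j ∉ bad → (μ (A i ∩ A j)).toReal = α ^ 2)) :
    (n : ℝ) * α / (((n : ℝ) - 1 - s) * α + (s + 1)) ≤ (μ (⋃ i, A i)).toReal ∧
      (n : ℝ) * α / ((n : ℝ) * α + (s + 1))
        ≤ (n : ℝ) * α / (((n : ℝ) - 1 - s) * α + (s + 1)) := by
  set D : ℝ := ((n : ℝ) - 1 - s) * α + (s + 1)
  have hnα : 0 < (n : ℝ) * α := mul_pos (by exact_mod_cast (by omega : 0 < n)) hα0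
  have hD : 0 < D := by
    have : 0 ≤ ((s : ℝ) + 1) * (1 - α) := by nlinarith
    linarith [show D = n * α + ((s : ℝ) + 1) * (1 - α) by ring]
  have hrow : ∀ i, ∑ j, μ.real (A i ∩ A j) ≤ α * D := fun i ↦ by
    obtain ⟨bad, hcard, hi, hprop⟩ := hbad i
    simpa using sum_le_of_le_of_eq_sq_off (g := fun j ↦ μ.real (A i ∩ A j)) hα0.le hα1 hcard hi
      (by simpa [measureReal_def] using hA i) (fun j hj ↦ (hprop j fun h ↦ hi (h ▸ hj)).1 hj)
      (fun j hji hj ↦ (hprop j hji).2 hj)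
  have hS1 : ∑ i, μ.real (A i) = n * α := by simp [measureReal_def, hA]
  have hS2 : ∑ i, ∑ j, μ.real (A i ∩ A j) ≤ n * (α * D) := by
    simpa using sum_le_card_nsmul univ _ _ fun i _ ↦ hrow i
  have hCE := sq_sum_measureReal_le_measureReal_iUnion_mul (μ := μ) hmeas
  rw [hS1] at hCE
  have hunion : (n : ℝ) * α ≤ μ.real (⋃ i, A i) * D := by
    refine le_of_mul_le_mul_left ?_ hnα
    nlinarith [measureReal_nonneg (μ := μ) (s := ⋃ i, A i)]
  refine ⟨(div_le_iff₀ hD).2 hunion, div_le_div_of_nonneg_left hnα.le hD ?_⟩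
  nlinarith [(Nat.cast_nonneg s : (0 : ℝ) ≤ s)]

/-- Suppose `A₁,…,Aₙ` are events each of probability `α ∈ (0,1]`, and for
each `i` there is a "bad" set of at most `s` indices `j ≠ i` where
`P(Aᵢ ∩ Aⱼ) ≤ α`, while `P(Aᵢ ∩ Aⱼ) = α²` for all other `j ≠ i`. Then, by de Caen's
inequality, `P(⋃ i, Aᵢ) ≥ nα / ((n-1-s)α + (s+1)) ≥ nα / (nα + (s+1))`. -/
theorem stmt11 {Ω : Type*} [MeasurableSpace Ω] (μ : Measure Ω) [IsProbabilityMeasure μ]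
    (n : ℕ) (hn : 2 ≤ n) (A : Fin n → Set Ω) (hmeas : ∀ i, MeasurableSet (A i))
    (α : ℝ) (hα0 : 0 < α) (hα1 : α ≤ 1)
    (s : ℕ) (hs : s ≤ n - 1)
    (hA : ∀ i, (μ (A i)).toReal = α)
    (hbad : ∀ i, ∃ bad : Finset (Fin n), bad.card ≤ s ∧ i ∉ bad ∧
      ∀ j, j ≠ i →
        (j ∈ bad → (μ (A i ∩ A j)).toReal ≤ α) ∧
        (j ∉ bad → (μ (A i ∩ A j)).toReal = α ^ 2)) :
    (n : ℝ) * α / (((n : ℝ) - 1 - s) * α + (s + 1)) ≤ (μ (⋃ i, A i)).toReal ∧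
      (n : ℝ) * α / ((n : ℝ) * α + (s + 1))
        ≤ (n : ℝ) * α / (((n : ℝ) - 1 - s) * α + (s + 1)) :=
  stmt11_general μ n hn A hmeas α hα0 hα1 s hA hbad
end

section
/- Let $\mathbf{x}_m$ be a codeword of the random linear ensemble with $q^K > 2$, let $\mathbf{y}$ be a fixed channel output, and let $A_{m'}(\mathbf{x}_m, \mathbf{y})$ denote the event that codeword $\mathbf{x}_{m'}$ ($m' \neq m$) lies in the set $A(\mathbf{x}_m, \mathbf{y}) = \{\mathbf{x}' : P_N(\mathbf{y}|\mathbf{x}') \geq P_N(\mathbf{y}|\mathbf{x}_m)\}$, with $\alpha = \Pr(A_{m'}(\mathbf{x}_m, \mathbf{y}))$. Then: (a) if $\mathbf{u}_m \notin \mathrm{span}^*(\mathbf{u}_{m'}, \mathbf{u}_{m''})$, then $\Pr(A_{m'}(\mathbf{x}_m, \mathbf{y}) \cap A_{m''}(\mathbf{x}_m, \mathbf{y})) = \alpha^2$; (b) if $\mathbf{u}_m \in \mathrm{span}^*(\mathbf{u}_{m'}, \mathbf{u}_{m''})$, then $\Pr(A_{m'}(\mathbf{x}_m, \mathbf{y})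 \cap A_{m''}(\mathbf{x}_m, \mathbf{y})) \leq \alpha$. -/
/-!
Given the transmitted codeword `xm`, the offset is determined by the generator matrix,
`v = xm - um ᵥ* G`, so the conditional law is that of a uniform `G`, and the codeword of `u'` becomes
`xm + (u' - um) ᵥ* G`. If `um ∉ span*(um', um'')`, the differences `um' - um` and `um'' - um` are
linearly independent, so `G ↦ ((um' - um) ᵥ* G, (um'' - um) ᵥ* G)` is a surjective additive map.
All its fibres have the size of its kernel, so its image of the uniform law is uniform: the two
vectors are independent and uniform, and the events `A um'`, `A um''` are independent with the same
probability `α`. Part (b) is monotonicity of the measure.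
-/

open ProbabilityTheory MeasureTheory Function Matrix
open scoped ENNReal

lemma AddMonoidHom.ncard_preimage_of_surjective {G H : Type*} [AddGroup G] [AddGroup H]
    (T : G →+ H) (hT : Surjective T) (S : Set H) :
    (T ⁻¹' S).ncard = Nat.card T.ker * S.ncard := by
  have hσ : ∀ h, T (surjInv hT h) = h := surjInv_eq hT
  let e : T ⁻¹' S ≃ T.ker × S :=
    { toFun x := (⟨x - surjInv hT (T x), by simp [hσ]⟩, ⟨T x, x.2⟩)
      invFun p := ⟨p.1 + surjInv hT p.2, by simp [T.mem_ker.1 p.1.2, hσ]⟩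
      left_inv x := by ext; simp
      right_inv p := by ext <;> simp [T.mem_ker.1 p.1.2, hσ] }
  rw [← Nat.card_coe_set_eq, Nat.card_congr e, Nat.card_prod, Nat.card_coe_set_eq]

lemma AddMonoidHom.ncard_preimage_div_card_of_surjective {G H : Type*} [AddGroup G] [AddGroup H]
    [Finite G] (T : G →+ H) (hT : Surjective T) (S : Set H) :
    ((T ⁻¹' S).ncard : ℝ≥0∞) / Nat.card G = S.ncard / Nat.card H := by
  have hG : Nat.card G = Nat.card T.ker * Nat.card H := by
    simpa using T.ncard_preimage_of_surjective hT Set.univ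
  rw [T.ncard_preimage_of_surjective hT S, hG]
  push_cast
  exact ENNReal.mul_div_mul_left _ _ (by exact_mod_cast (Nat.card_pos (α := T.ker)).ne')
    (ENNReal.natCast_ne_top _)

lemma linearIndependent_pair_sub_of_notMem_line {K V : Type*} [Field K] [AddCommGroup V]
    [Module K V] {a b c : V} (hbc : b ≠ c)
    (ha : a ∉ (fun w => b + w) '' (Submodule.span K {c - b} : Set V)) :
    LinearIndependent K ![b - a, c - a] := by
  refine LinearIndependent.pair_iff.2 fun s t hst => ?_
  by_cases hst0 : s + t = 0
  · obtain rfl : t = -s := eq_neg_of_add_eq_zero_right hst0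
    have hs : s • (b - c) = 0 := by linear_combination (norm := module) hst
    have : s = 0 := (smul_eq_zero.1 hs).resolve_right (sub_ne_zero.2 hbc)
    simp [this]
  · refine absurd ⟨((s + t)⁻¹ * t) • (c - b),
      Submodule.smul_mem _ _ (Submodule.mem_span_singleton_self _), ?_⟩ ha
    apply smul_right_injective V hst0
    simp only [smul_add, smul_smul, mul_inv_cancel_left₀ hst0]
    linear_combination (norm := module) hst

namespace Matrix

variable {K : Type*} [Field K] {m n : Type*} [Fintype m] [Fintype n]

lemma mulVec_surjective_of_linearIndependent_row {M : Matrix m n K}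
    (hM : LinearIndependent K M.row) : Surjective M.mulVec :=
  LinearMap.range_eq_top.1 <| Submodule.eq_top_of_finrank_eq <|
    hM.rank_matrix.trans (Module.finrank_fintype_fun_eq_card K).symm

lemma mul_left_surjective_of_linearIndependent_row {o : Type*} {M : Matrix m n K}
    (hM : LinearIndependent K M.row) : Surjective fun G : Matrix n o K => M * G := by
  classical
  obtain ⟨B, hB⟩ := mulVec_surjective_iff_exists_right_inverse.1
    (mulVec_surjective_of_linearIndependent_row hM)
  exact fun Z => ⟨B * Z, by simp only [← Matrix.mul_assoc, hB, Matrix.one_mul]⟩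

lemma ncard_setOf_vecMul_mem_div_card [Finite K] {ι : Type*} [Fintype ι] {a : ι → m → K}
    (ha : LinearIndependent K a) (S : ι → Set (n → K)) :
    ({G : Matrix m n K | ∀ i, a i ᵥ* G ∈ S i}.ncard : ℝ≥0∞) / Nat.card (Matrix m n K) =
      ∏ i, ((S i).ncard : ℝ≥0∞) / Nat.card (n → K) := by
  have hset : {G : Matrix m n K | ∀ i, a i ᵥ* G ∈ S i} =
      addMonoidHomMulLeft (of a) ⁻¹' {Z | ∀ i, Z i ∈ S i} := by
    ext G; exact Iff.rfl
  have hpi : {Z : Matrix ι n K | ∀ i, Z i ∈ S i}.ncard = ∏ i, (S i).ncard := by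
    rw [← Nat.card_coe_set_eq]
    refine (Nat.card_congr
      (Equiv.subtypePiEquivPi (β := fun _ : ι => n → K) (p := fun i z => z ∈ S i))).trans ?_
    simp only [Nat.card_pi, Nat.card_coe_set_eq]
  have hcard : Nat.card (Matrix ι n K) = ∏ _ : ι, Nat.card (n → K) := Nat.card_pi
  rw [hset, AddMonoidHom.ncard_preimage_div_card_of_surjective _
    (mul_left_surjective_of_linearIndependent_row ha), hpi, hcard,
    ENNReal.prod_div_distrib_of_ne_top fun _ _ => ENNReal.natCast_ne_top _]
  push_cast; rfl

end Matrix

lemma uniformOn_graph {α β : Type*} [Finite α] (φ : α → β) (t : Set (α × β)) :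
    @uniformOn (α × β) ⊤ {ω | ω.2 = φ ω.1} t = {a | (a, φ a) ∈ t}.ncard / Nat.card α := by
  let : MeasurableSpace (α × β) := ⊤
  set f : α → α × β := fun a => (a, φ a)
  have hcount : ∀ u : Set α, Measure.count (f '' u) = u.ncard := by
    intro u
    rw [Measure.count_apply MeasurableSpace.measurableSet_top,
      Injective.encard_image (fun a b h => congrArg Prod.fst h), ← u.toFinite.cast_ncard_eq]
    rfl
  have hgraph : {ω : α × β | ω.2 = φ ω.1} = Set.range f := by
    ext ⟨a, b⟩; simp [f, eq_comm]
  rw [uniformOn, cond_apply MeasurableSpace.measurableSet_top, hgraph, Set.inter_comm,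
    ← Set.image_preimage_eq_inter_range, ← Set.image_univ, hcount, hcount, Set.ncard_univ,
    div_eq_mul_inv, mul_comm]
  rfl

theorem stmt12_general (K N : ℕ) (F : Type*) [Field F] [Fintype F]
    (W : (Fin N → F) → ℝ)
    (um um' um'' : Fin K → F)
    (h3 : um' ≠ um'')
    (xm : Fin N → F)
    (enc : (Fin K → F) → Matrix (Fin K) (Fin N) F × (Fin N → F) → (Fin N → F))
    (henc : ∀ u ω, enc u ω = Matrix.vecMul u ω.1 + ω.2)
    (C : Set (Matrix (Fin K) (Fin N) F × (Fin N → F)))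
    (hC : C = {ω | enc um ω = xm})
    (A : (Fin K → F) → Set (Matrix (Fin K) (Fin N) F × (Fin N → F)))
    (hA : ∀ u', A u' = {ω | W xm ≤ W (enc u' ω)})
    (α : ENNReal)
    (hα : α = @uniformOn _ ⊤ C (A um')) :
    (um ∉ (fun w => um' + w) '' (Submodule.span F {um'' - um'} : Set (Fin K → F)) →
        @uniformOn _ ⊤ C (A um' ∩ A um'') = α ^ 2) ∧
    (um ∈ (fun w => um' + w) '' (Submodule.span F {um'' - um'} : Set (Fin K → F)) →
        @uniformOn _ ⊤ C (A um' ∩ A um'') ≤ α) := by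
  refine ⟨fun hspan => ?_, fun _ => hα ▸ measure_mono Set.inter_subset_left⟩
  set P : Set (Fin N → F) := {z | W xm ≤ W (xm + z)}
  have hC' : C = {ω | ω.2 = xm - um ᵥ* ω.1} := by
    ext ω; simp [hC, henc, eq_sub_iff_add_eq']
  have hA' : ∀ u' G, (G, xm - um ᵥ* G) ∈ A u' ↔ (u' - um) ᵥ* G ∈ P := by
    intro u' G
    have : u' ᵥ* G + (xm - um ᵥ* G) = xm + (u' - um) ᵥ* G := by rw [sub_vecMul]; abel
    simp [P, hA, henc, this]
  have hli := linearIndependent_pair_sub_of_notMem_line h3 hspan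
  have hsingle : {G | (G, xm - um ᵥ* G) ∈ A um'} = {G | ∀ i, ![um' - um] i ᵥ* G ∈ P} := by
    ext G; simp [hA']
  have hpair : {G | (G, xm - um ᵥ* G) ∈ A um' ∩ A um''} =
      {G | ∀ i, ![um' - um, um'' - um] i ᵥ* G ∈ P} := by
    ext G; simp [hA', Fin.forall_fin_two]
  have hli1 : LinearIndependent F ![um' - um] :=
    linearIndependent_unique_iff.2 (hli.ne_zero 0)
  rw [hα, hC', uniformOn_graph (fun G => xm - um ᵥ* G), uniformOn_graph (fun G => xm - um ᵥ* G),
    hsingle, hpair, ncard_setOf_vecMul_mem_div_card hli, ncard_setOf_vecMul_mem_div_card hli1,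
    Fin.prod_const, Fin.prod_const, pow_one]

/-- pairwise intersection of error events, random linear ensemble:
Messages `u` map to codewords `uG + v` with `(G, v)` uniform. Fix a channel output via its
likelihood function `W x = P_N(y|x)`, a transmitted codeword `xm` for message `um`
(conditioning on the event `um·G + v = xm`), and distinct messages `um, um', um''` with
`q^K > 2`. Writing `A_{m'}` for the event that the codeword of `m'` is at least as likely
as `xm`, and `α = Pr(A_{m'} | xm)`: (a) if `um ∉ span*(um', um'')` then
`Pr(A_{m'} ∩ A_{m''} | xm) = α²`; (b) if `um ∈ span*(um', um'')` then
`Pr(A_{m'} ∩ A_{m''} | xm) ≤ α`. -/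
theorem stmt12 (q K N : ℕ) (F : Type*) [Field F] [Fintype F] [DecidableEq F]
    (hq : Fintype.card F = q) (hqK : 2 < q ^ K)
    (W : (Fin N → F) → ℝ)
    (um um' um'' : Fin K → F)
    (h1 : um ≠ um') (h2 : um ≠ um'') (h3 : um' ≠ um'')
    (xm : Fin N → F)
    (enc : (Fin K → F) → Matrix (Fin K) (Fin N) F × (Fin N → F) → (Fin N → F))
    (henc : ∀ u ω, enc u ω = Matrix.vecMul u ω.1 + ω.2)
    (C : Set (Matrix (Fin K) (Fin N) F × (Fin N → F)))
    (hC : C = {ω | enc um ω = xm})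
    (A : (Fin K → F) → Set (Matrix (Fin K) (Fin N) F × (Fin N → F)))
    (hA : ∀ u', A u' = {ω | W xm ≤ W (enc u' ω)})
    (α : ENNReal)
    (hα : α = @uniformOn _ ⊤ C (A um')) :
    (um ∉ (fun w => um' + w) '' (Submodule.span F {um'' - um'} : Set (Fin K → F)) →
        @uniformOn _ ⊤ C (A um' ∩ A um'') = α ^ 2) ∧
    (um ∈ (fun w => um' + w) '' (Submodule.span F {um'' - um'} : Set (Fin K → F)) →
        @uniformOn _ ⊤ C (A um' ∩ A um'') ≤ α) :=
  stmt12_general K N F W um um' um'' h3 xm enc henc C hC A hA α hα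
end

section
/- Let $\mathbf{x}_m$ be a codeword of the random linear ensemble with $M = q^K > 2$, $\mathbf{y}$ a fixed channel output, $\alpha = \Pr(A_{m'}(\mathbf{x}_m, \mathbf{y}))$, and $\rho \geq 1$ a constant. Then $\frac{(M-1)\alpha}{q} - [(M-1)\alpha]^\rho \leq \Pr\left(\bigcup_{m' \neq m} A_{m'}(\mathbf{x}_m, \mathbf{y})\right) \leq (M-1)\alpha$. -/
/-!
Conditioning on the transmitted codeword fixes `v = xm - um ᵥ* G` and leaves `G` uniform, so the
event `A u` becomes `(u - um) ᵥ* G ∈ T` with `T = {z | W xm ≤ W (z + xm)}`. For `u ≠ um` the map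
`G ↦ (u - um) ᵥ* G` is a surjective homomorphism, and for `u - um`, `u' - um` linearly independent
so is `G ↦ ((u - um) ᵥ* G, (u' - um) ᵥ* G)`; hence such pairs of events are independent, and for a
fixed `u` only the `q - 1` nonzero multiples of `u - um` fail this.

The upper bound is the union bound. For the lower bound, the Chung–Erdős inequality
`P(⋃ Aᵢ) ≥ (∑ P(Aᵢ))² / ∑ P(Aᵢ ∩ Aⱼ)` with `∑ P(Aᵢ ∩ Aⱼ) ≤ (M - 1)((q - 1)α + (M - 1)α²)` gives
`P ≥ S / (q - 1 + S)` for `S = (M - 1)α`. This is at least `S / q` when `S ≤ 1`, while for `S > 1`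
the claimed lower bound `S / q - S ^ ρ` is negative.
-/

open Finset Matrix ProbabilityTheory

namespace AddMonoidHom

variable {V W W' : Type*} [AddGroup V] [AddGroup W] [AddGroup W'] [Fintype V] [Fintype W]
  [Fintype W'] [DecidableEq W] [DecidableEq W']

lemma card_preimage_mul_card (f : V →+ W) (hf : Function.Surjective f) (S : Finset W) :
    #{v | f v ∈ S} * Fintype.card W = #S * Fintype.card V := by
  have hsum (S : Finset W) : #{v | f v ∈ S} = #S * #{v | f v = 0} := by
    rw [card_eq_sum_card_fiberwise (s := {v | f v ∈ S}) (t := S) fun v hv => (mem_filter.1 hv).2,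
      sum_const_nat fun w hw => ?_]
    rw [filter_filter, ← card_fiber_eq_of_mem_range f (hf w) (hf 0)]
    congr 1
    ext v
    simp only [mem_filter, mem_univ, true_and, and_iff_right_iff_imp]
    rintro rfl
    exact hw
  have hcard : Fintype.card V = Fintype.card W * #{v | f v = 0} := by
    simpa using hsum univ
  rw [hsum, hcard]
  ring

lemma dens_preimage_and (f : V →+ W) (g : V →+ W') (hfg : Function.Surjective (f.prod g))
    (S : Finset W) (S' : Finset W') :
    dens {v | f v ∈ S ∧ g v ∈ S'} = dens {v | f v ∈ S} * dens {v | g v ∈ S'} := by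
  have hf : Function.Surjective f := fun w => (hfg (w, 0)).imp fun v hv => congrArg Prod.fst hv
  have hg : Function.Surjective g := fun w => (hfg (0, w)).imp fun v hv => congrArg Prod.snd hv
  have hprod := (f.prod g).card_preimage_mul_card hfg (S ×ˢ S')
  simp only [prod_apply, mem_product, Fintype.card_prod, card_product] at hprod
  have hcard : #{v | f v ∈ S ∧ g v ∈ S'} * Fintype.card V = #{v | f v ∈ S} * #{v | g v ∈ S'} := by
    refine Nat.eq_of_mul_eq_mul_right
      (Nat.mul_pos (Fintype.card_pos (α := W)) (Fintype.card_pos (α := W'))) ?_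
    calc #{v | f v ∈ S ∧ g v ∈ S'} * Fintype.card V * (Fintype.card W * Fintype.card W')
        = #S * #S' * Fintype.card V * Fintype.card V := by rw [← hprod]; ring
      _ = (#{v | f v ∈ S} * Fintype.card W) * (#{v | g v ∈ S'} * Fintype.card W') := by
        rw [f.card_preimage_mul_card hf, g.card_preimage_mul_card hg]; ring
      _ = _ := by ring
  simp only [dens_eq_card_div_card]
  rw [div_mul_div_comm, div_eq_div_iff (by positivity) (by positivity), ← mul_assoc]
  exact_mod_cast congrArg (· * Fintype.card V) hcard

end AddMonoidHom

lemma LinearIndependent.exists_vecMul_eq {ι m n F : Type*} [Fintype ι] [DecidableEq ι]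
    [Fintype m] [Field F] {d : ι → m → F} (hd : LinearIndependent F d) (a : ι → n → F) :
    ∃ G : Matrix m n F, ∀ i, d i ᵥ* G = a i := by
  let D : Matrix ι m F := Matrix.of d
  have hsurj : Function.Surjective D.mulVec := by
    rw [← Matrix.coe_mulVecLin, ← LinearMap.range_eq_top]
    apply Submodule.eq_top_of_finrank_eq
    rw [← Matrix.rank, LinearIndependent.rank_matrix (M := D) hd,
      Module.finrank_fintype_fun_eq_card]
  obtain ⟨B, hB⟩ := mulVec_surjective_iff_exists_right_inverse.1 hsurj
  refine ⟨B * Matrix.of a, fun i => ?_⟩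
  change D i ᵥ* _ = _
  rw [← mul_apply_eq_vecMul, ← Matrix.mul_assoc, hB, Matrix.one_mul]
  rfl

open Classical in
lemma card_filter_not_linearIndependent_sub_le {F V : Type*} [Field F] [Fintype F]
    [AddCommGroup V] [Module F V] [Fintype V] [DecidableEq V] (x₀ : V) {d : V} (hd : d ≠ 0) :
    #{x ∈ univ.erase x₀ | ¬LinearIndependent F ![x - x₀, d]} ≤ Fintype.card F - 1 := by
  calc #{x ∈ univ.erase x₀ | ¬LinearIndependent F ![x - x₀, d]}
      ≤ #((univ.erase (0 : F)).image (· • d + x₀)) := by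
        refine card_le_card fun x hx => ?_
        simp only [mem_filter, mem_erase, mem_univ, and_true, linearIndependent_fin2,
          Matrix.cons_val_one, Matrix.cons_val_zero, ne_eq, hd, not_false_eq_true, true_and,
          not_forall, not_not] at hx
        obtain ⟨hx, c, hc⟩ := hx
        refine mem_image.2 ⟨c, mem_erase.2 ⟨fun hc0 => hx ?_, mem_univ c⟩, by rw [hc]; abel⟩
        rw [hc0, zero_smul, eq_comm, sub_eq_zero] at hc
        exact hc
    _ ≤ Fintype.card F - 1 := card_image_le.trans (by rw [card_erase_of_mem (mem_univ _), card_univ])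

section RandomMatrix

variable {m n F : Type*} [Fintype m] [DecidableEq m] [Fintype n] [DecidableEq n] [Field F]
  [Fintype F] [DecidableEq F]

lemma dens_vecMul_mem_and {d d' : m → F} (h : LinearIndependent F ![d, d'])
    (S S' : Finset (n → F)) :
    dens {G : Matrix m n F | d ᵥ* G ∈ S ∧ d' ᵥ* G ∈ S'} =
      dens {G : Matrix m n F | d ᵥ* G ∈ S} * dens {G : Matrix m n F | d' ᵥ* G ∈ S'} := by
  let vecMulHom (x : m → F) : Matrix m n F →+ (n → F) :=
    AddMonoidHom.mk' (x ᵥ* ·) fun A B => vecMul_add A B x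
  refine (vecMulHom d).dens_preimage_and (vecMulHom d') (fun a => ?_) S S'
  obtain ⟨G, hG⟩ := h.exists_vecMul_eq ![a.1, a.2]
  exact ⟨G, Prod.ext (hG 0) (hG 1)⟩

/-- Once the transmitted codeword `x₀ = u₀ ᵥ* G + v` fixes `v`, the codeword of `u` is
`(u - u₀) ᵥ* G + x₀`; `T` is the set of offsets from `x₀` that count as an error. -/
def errorEvent (u₀ : m → F) (T : Finset (n → F)) (u : m → F) : Finset (Matrix m n F) :=
  {G | (u - u₀) ᵥ* G ∈ T}

lemma card_filter_dens_errorEvent_inter_ne_le (u₀ : m → F) (T : Finset (n → F)) {α : ℝ}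
    (hE : ∀ u ∈ univ.erase u₀, ((errorEvent u₀ T u).dens : ℝ) = α) {u : m → F}
    (hu : u ∈ univ.erase u₀) :
    #{u' ∈ univ.erase u₀ | ((errorEvent u₀ T u ∩ errorEvent u₀ T u').dens : ℝ) ≠ α ^ 2} ≤
      Fintype.card F - 1 := by
  refine (card_le_card fun u' => ?_).trans
    (card_filter_not_linearIndependent_sub_le u₀ (sub_ne_zero.2 (ne_of_mem_erase hu)))
  simp only [mem_filter]
  refine fun ⟨hu', hne⟩ => ⟨hu', fun hind => hne ?_⟩
  rw [inter_comm, errorEvent, errorEvent, ← filter_and, dens_vecMul_mem_and hind, NNRat.cast_mul,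
    ← errorEvent, ← errorEvent, hE u hu, hE u' hu', sq]

end RandomMatrix

lemma div_add_one_sub_rpow_le {S P r ρ : ℝ} (hS : 0 ≤ S) (hP : 0 ≤ P) (hr : 0 ≤ r) (hρ : 1 ≤ ρ)
    (h : S ^ 2 ≤ P * (r * S + S ^ 2)) : S / (r + 1) - S ^ ρ ≤ P := by
  have hSρ : 0 ≤ S ^ ρ := Real.rpow_nonneg hS ρ
  rcases le_or_gt S 1 with hS1 | hS1
  · suffices S ≤ P * (r + 1) by
      rw [sub_le_iff_le_add, div_le_iff₀ (by linarith)]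
      nlinarith
    rcases hS.eq_or_lt with rfl | hS0
    · positivity
    · have : S * S ≤ P * (r + S) * S := by nlinarith
      nlinarith [le_of_mul_le_mul_right this hS0]
  · have : S ≤ S ^ ρ := by
      simpa using Real.rpow_le_rpow_of_exponent_le hS1.le hρ
    have : S / (r + 1) ≤ S := div_le_self hS (by linarith)
    linarith

section UnionBounds

variable {ι Ω : Type*} [DecidableEq Ω]

lemma sum_card_filter_mem_eq_sum_card {U : Finset Ω} (I : Finset ι) (E : ι → Finset Ω)
    (hU : ∀ i ∈ I, E i ⊆ U) : ∑ ω ∈ U, #{i ∈ I | ω ∈ E i} = ∑ i ∈ I, #(E i) := by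
  simp_rw [card_eq_sum_ones (filter _ _), sum_filter]
  rw [sum_comm]
  refine sum_congr rfl fun i hi => ?_
  rw [← sum_filter, ← card_eq_sum_ones, filter_mem_eq_inter, inter_eq_right.2 (hU i hi)]

/-- The Chung–Erdős inequality. -/
theorem sq_sum_card_le_card_biUnion_mul (I : Finset ι) (E : ι → Finset Ω) :
    (∑ i ∈ I, #(E i)) ^ 2 ≤ #(I.biUnion E) * ∑ i ∈ I, ∑ j ∈ I, #(E i ∩ E j) := by
  set U := I.biUnion E
  have hsq (ω : Ω) : #{i ∈ I | ω ∈ E i} ^ 2 = #{p ∈ I ×ˢ I | ω ∈ E p.1 ∩ E p.2} := by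
    simp only [mem_inter]
    rw [sq, ← card_product, ← filter_product]
  calc (∑ i ∈ I, #(E i)) ^ 2 = (∑ ω ∈ U, #{i ∈ I | ω ∈ E i}) ^ 2 := by
        rw [sum_card_filter_mem_eq_sum_card I E fun i => subset_biUnion_of_mem E]
    _ ≤ #U * ∑ ω ∈ U, #{i ∈ I | ω ∈ E i} ^ 2 := sq_sum_le_card_mul_sum_sq
    _ = #U * ∑ i ∈ I, ∑ j ∈ I, #(E i ∩ E j) := by
        simp_rw [hsq]
        rw [sum_card_filter_mem_eq_sum_card (I ×ˢ I) (fun p => E p.1 ∩ E p.2)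
          fun p hp => inter_subset_left.trans (subset_biUnion_of_mem E (mem_product.1 hp).1),
          sum_product]

variable [Fintype Ω] (I : Finset ι) (E : ι → Finset Ω) {α : ℝ}

theorem sq_sum_dens_le_dens_biUnion_mul :
    (∑ i ∈ I, (E i).dens) ^ 2 ≤ (I.biUnion E).dens * ∑ i ∈ I, ∑ j ∈ I, (E i ∩ E j).dens := by
  simp only [dens_eq_card_div_card, ← sum_div, div_pow, div_mul_div_comm, ← sq]
  gcongr
  exact_mod_cast sq_sum_card_le_card_biUnion_mul I E

lemma dens_biUnion_le_card_mul (hE : ∀ i ∈ I, ((E i).dens : ℝ) = α) :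
    ((I.biUnion E).dens : ℝ) ≤ #I * α :=
  calc ((I.biUnion E).dens : ℝ) ≤ ∑ i ∈ I, ((E i).dens : ℝ) := by
        exact_mod_cast dens_biUnion_le
    _ = #I * α := by rw [sum_congr rfl hE, sum_const, nsmul_eq_mul]

lemma sq_le_dens_biUnion_mul {r : ℕ} (hE : ∀ i ∈ I, ((E i).dens : ℝ) = α)
    (hexc : ∀ i ∈ I, #{j ∈ I | ((E i ∩ E j).dens : ℝ) ≠ α ^ 2} ≤ r) :
    (#I * α) ^ 2 ≤ (I.biUnion E).dens * (r * (#I * α) + (#I * α) ^ 2) := by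
  classical
  have hrow (i) (hi : i ∈ I) : ∑ j ∈ I, ((E i ∩ E j).dens : ℝ) ≤ r * α + #I * α ^ 2 := by
    have hα : 0 ≤ α := hE i hi ▸ by positivity
    set J := {j ∈ I | ((E i ∩ E j).dens : ℝ) ≠ α ^ 2}
    -- each exceptional intersection still has density at most `α`
    have hterm (j) (hj : j ∈ I) :
        ((E i ∩ E j).dens : ℝ) ≤ (if j ∈ J then α else 0) + α ^ 2 := by
      by_cases hjJ : j ∈ J
      · have : ((E i ∩ E j).dens : ℝ) ≤ (E j).dens := by
          exact_mod_cast dens_le_dens inter_subset_right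
        rw [if_pos hjJ, ← hE j hj]
        linarith [sq_nonneg ((E j).dens : ℝ)]
      · rw [if_neg hjJ, zero_add]
        exact le_of_eq (by simpa [J, hj] using hjJ)
    calc ∑ j ∈ I, ((E i ∩ E j).dens : ℝ)
        ≤ ∑ j ∈ I, ((if j ∈ J then α else 0) + α ^ 2) := sum_le_sum hterm
      _ = #J * α + #I * α ^ 2 := by
        rw [sum_add_distrib, sum_ite_mem, inter_eq_right.2 (filter_subset _ _)]
        simp only [sum_const, nsmul_eq_mul]
        rfl
      _ ≤ r * α + #I * α ^ 2 := by gcongr; exact Nat.cast_le.2 (hexc i hi)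
  calc (#I * α) ^ 2 = (∑ i ∈ I, ((E i).dens : ℝ)) ^ 2 := by
        rw [sum_congr rfl hE, sum_const, nsmul_eq_mul]
    _ ≤ (I.biUnion E).dens * ∑ i ∈ I, ∑ j ∈ I, ((E i ∩ E j).dens : ℝ) := by
      exact_mod_cast sq_sum_dens_le_dens_biUnion_mul I E
    _ ≤ (I.biUnion E).dens * ∑ i ∈ I, (r * α + #I * α ^ 2) := by
      gcongr with i hi
      exact hrow i hi
    _ = (I.biUnion E).dens * (r * (#I * α) + (#I * α) ^ 2) := by
      rw [sum_const, nsmul_eq_mul]; ring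

lemma div_add_one_sub_rpow_le_dens_biUnion {r : ℕ} {ρ : ℝ} (hρ : 1 ≤ ρ)
    (hE : ∀ i ∈ I, ((E i).dens : ℝ) = α)
    (hexc : ∀ i ∈ I, #{j ∈ I | ((E i ∩ E j).dens : ℝ) ≠ α ^ 2} ≤ r) :
    #I * α / (r + 1) - (#I * α) ^ ρ ≤ (I.biUnion E).dens := by
  have hS : 0 ≤ (#I : ℝ) * α := by
    rcases I.eq_empty_or_nonempty with hI | ⟨i, hi⟩
    · simp [hI]
    · exact mul_nonneg (Nat.cast_nonneg _) (hE i hi ▸ by positivity)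
  exact div_add_one_sub_rpow_le hS (by positivity) (by positivity) hρ
    (sq_le_dens_biUnion_mul I E hE hexc)

end UnionBounds

lemma uniformOn_graph_toReal {X Y : Type*} [Fintype X] [Fintype Y] [DecidableEq X]
    [DecidableEq Y] (φ : X → Y) (B : Set (X × Y)) [DecidablePred (· ∈ B)] :
    (@uniformOn (X × Y) ⊤ {ω | ω.2 = φ ω.1} B).toReal = dens {x | (x, φ x) ∈ B} := by
  have hinj : Function.Injective fun x => (x, φ x) := fun x y h => congrArg Prod.fst h
  have hgraph : {ω : X × Y | ω.2 = φ ω.1} = ↑(univ.image fun x => (x, φ x)) := by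
    ext ⟨x, y⟩; simp [eq_comm]
  have hB : B = ↑({ω | ω ∈ B} : Finset (X × Y)) := by simp
  conv_lhs => rw [hgraph, hB]
  rw [@uniformOn_apply_finset' _ _ ⊤ _ _ trivial trivial, ← filter_mem_eq_inter, filter_image,
    card_image_of_injective _ hinj, card_image_of_injective _ hinj, card_univ,
    ENNReal.toReal_div, dens_eq_card_div_card]
  simp

theorem stmt13_general (q K N : ℕ) (F : Type*) [Field F] [Fintype F]
    (hq : Fintype.card F = q) (M : ℕ) (hM : M = q ^ K)
    (W : (Fin N → F) → ℝ)
    (um : Fin K → F) (xm : Fin N → F)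
    (enc : (Fin K → F) → Matrix (Fin K) (Fin N) F × (Fin N → F) → (Fin N → F))
    (henc : ∀ u ω, enc u ω = Matrix.vecMul u ω.1 + ω.2)
    (C : Set (Matrix (Fin K) (Fin N) F × (Fin N → F)))
    (hC : C = {ω | enc um ω = xm})
    (A : (Fin K → F) → Set (Matrix (Fin K) (Fin N) F × (Fin N → F)))
    (hA : ∀ u', A u' = {ω | W xm ≤ W (enc u' ω)})
    (α : ℝ)
    (hα : ∀ u', u' ≠ um → (@uniformOn _ ⊤ C (A u')).toReal = α)
    (ρ : ℝ) (hρ : 1 ≤ ρ) :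
    ((M : ℝ) - 1) * α / q - (((M : ℝ) - 1) * α) ^ ρ
        ≤ (@uniformOn _ ⊤ C (⋃ u' ∈ {u' : Fin K → F | u' ≠ um}, A u')).toReal ∧
      (@uniformOn _ ⊤ C (⋃ u' ∈ {u' : Fin K → F | u' ≠ um}, A u')).toReal
        ≤ ((M : ℝ) - 1) * α := by
  classical
  set E := errorEvent um ({z | W xm ≤ W (z + xm)} : Finset (Fin N → F))
  set I : Finset (Fin K → F) := univ.erase um
  have hP (B) [DecidablePred (· ∈ B)] :
      (@uniformOn _ ⊤ C B).toReal = dens {G | (G, xm - um ᵥ* G) ∈ B} := by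
    rw [hC, show {ω | enc um ω = xm} = {ω | ω.2 = xm - um ᵥ* ω.1} by
      ext ω; simp [henc, eq_sub_iff_add_eq']]
    exact uniformOn_graph_toReal (fun G => xm - um ᵥ* G) B
  have hmem (u G) : (G, xm - um ᵥ* G) ∈ A u ↔ G ∈ E u := by
    simp [E, errorEvent, hA, henc, sub_vecMul, sub_add_eq_add_sub, add_sub_assoc]
  have hEα (u) (hu : u ∈ I) : ((E u).dens : ℝ) = α := by
    rw [← hα u (ne_of_mem_erase hu), hP]
    simp only [hmem, filter_univ_mem]
  have hPU : (@uniformOn _ ⊤ C (⋃ u ∈ {u : Fin K → F | u ≠ um}, A u)).toReal =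
      (I.biUnion E).dens := by
    rw [hP]
    congr 3
    ext G
    simp [hmem, I]
  have hI : (#I : ℝ) = M - 1 := by
    rw [card_erase_of_mem (mem_univ _), card_univ, Fintype.card_fun, Fintype.card_fin, hq, ← hM,
      Nat.cast_sub (hM ▸ Nat.one_le_pow _ _ (hq ▸ Fintype.card_pos)), Nat.cast_one]
  have hq1 : ((q - 1 : ℕ) : ℝ) + 1 = q := by
    rw [Nat.cast_sub (hq ▸ Fintype.card_pos), Nat.cast_one, sub_add_cancel]
  rw [hPU, ← hI, ← hq1]
  exact ⟨div_add_one_sub_rpow_le_dens_biUnion I E hρ hEα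
      fun u hu => hq ▸ card_filter_dens_errorEvent_inter_ne_le um _ hEα hu,
    dens_biUnion_le_card_mul I E hEα⟩

/-- Lemma 2 of the paper: In the random linear ensemble with
`M = q^K > 2`, conditioned on the transmitted codeword (`um·G + v = xm`), with every
pairwise error event having probability `α` and `ρ ≥ 1`,
`(M-1)α/q - ((M-1)α)^ρ ≤ Pr(⋃_{m' ≠ m} A_{m'}) ≤ (M-1)α`. -/
theorem stmt13 (q K N : ℕ) (F : Type*) [Field F] [Fintype F] [DecidableEq F]
    (hq : Fintype.card F = q) (M : ℕ) (hM : M = q ^ K) (hM2 : 2 < M)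
    (W : (Fin N → F) → ℝ)
    (um : Fin K → F) (xm : Fin N → F)
    (enc : (Fin K → F) → Matrix (Fin K) (Fin N) F × (Fin N → F) → (Fin N → F))
    (henc : ∀ u ω, enc u ω = Matrix.vecMul u ω.1 + ω.2)
    (C : Set (Matrix (Fin K) (Fin N) F × (Fin N → F)))
    (hC : C = {ω | enc um ω = xm})
    (A : (Fin K → F) → Set (Matrix (Fin K) (Fin N) F × (Fin N → F)))
    (hA : ∀ u', A u' = {ω | W xm ≤ W (enc u' ω)})
    (α : ℝ)
    (hα : ∀ u', u' ≠ um → (@uniformOn _ ⊤ C (A u')).toReal = α)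
    (ρ : ℝ) (hρ : 1 ≤ ρ) :
    ((M : ℝ) - 1) * α / q - (((M : ℝ) - 1) * α) ^ ρ
        ≤ (@uniformOn _ ⊤ C (⋃ u' ∈ {u' : Fin K → F | u' ≠ um}, A u')).toReal ∧
      (@uniformOn _ ⊤ C (⋃ u' ∈ {u' : Fin K → F | u' ≠ um}, A u')).toReal
        ≤ ((M : ℝ) - 1) * α :=
  stmt13_general q K N F hq M hM W um xm enc henc C hC A hA α hα ρ hρ
end
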